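/- arXiv:2403.19883 — 2 statements merged into one kernel-verified Lean document; each statement's English description precedes it below -/
import Mathlib

section
/- (Concretizer invariant) Throughout the concretizer's execution, the partially-built policy π satisfies: domain(π) ⊆ D, reach(π) ⊆ D ∪ F, and for every s ∈ domain(π), reach(π,s) ∩ F ≠ ∅. -/
/-- The domain of a policy (partial function from states to actions). -/
def pdom {S A : Type*} (π : S → Option A) : Set S := {s | π s ≠ none}

/-- One π-transition step: from `s` take the action `π s` prescribes, landing in a successor. -/
def pstep {S A : Type*} (succs : S → A → Set S) (π : S → Option A) (s s' : S) : Prop :=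
  ∃ a, π s = some a ∧ s' ∈ succs s a

/-- `reachFrom succs π s` : states reachable from `s` by π-trajectories (including `s`). -/
def reachFrom {S A : Type*} (succs : S → A → Set S) (π : S → Option A) (s : S) : Set S :=
  {s' | Relation.ReflTransGen (pstep succs π) s s'}

/-- `reachAll succs π` : states reachable from some domain state of `π`. -/
def reachAll {S A : Type*} (succs : S → A → Set S) (π : S → Option A) : Set S :=
  ⋃ s ∈ pdom π, reachFrom succs π s

/-- Frontier of a policy: reachable but unmapped states. -/
def front {S A : Type*} (succs : S → A → Set S) (π : S → Option A) : Set S :=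
  reachAll succs π \ pdom π

/-- `escape succs π s` : frontier states π-reachable from `s`. -/
def escape {S A : Type*} (succs : S → A → Set S) (π : S → Option A) (s : S) : Set S :=
  reachFrom succs π s ∩ front succs π

/-- A policy is proper iff every domain state reaches a frontier state. -/
def proper {S A : Type*} (succs : S → A → Set S) (π : S → Option A) : Prop :=
  ∀ s ∈ pdom π, (escape succs π s).Nonempty

/-- `π'` is a sub-policy of `π` : restriction of `π` to a subset of its domain. -/
def subpolicy {S A : Type*} (π' π : S → Option A) : Prop :=
  ∀ s a, π' s = some a → π s = some a

/-- Goal-closed: every frontier state is a goal state. -/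
def goalClosed {S A : Type*} (succs : S → A → Set S) (Sg : Set S) (π : S → Option A) : Prop :=
  front succs π ⊆ Sg

/-- `remain(π) = (front(π) \ S*) ∪ ({s₀} \ (S* ∪ domain(π)))`. -/
def remainSet {S A : Type*} (succs : S → A → Set S) (Sg : Set S) (s0 : S)
    (π : S → Option A) : Set S :=
  (front succs π \ Sg) ∪ ({s0} \ (Sg ∪ pdom π))

/-- A solution: a strong-cyclic (goal-closed and proper) policy covering the initial state. -/
def isSolution {S A : Type*} (succs : S → A → Set S) (Sg : Set S) (s0 : S)
    (π : S → Option A) : Prop :=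
  goalClosed succs Sg π ∧ proper succs π ∧ s0 ∈ Sg ∪ pdom π

/-- `CRun app succs D F π` : the policy `π` can be produced by a sequence of steps of the
greedy concretizer on input `(D, F)`, starting from the empty policy.  Each step picks an
unmapped `s ∈ D` and an applicable action `a` with `succs s a ∩ (F ∪ D_handled) ≠ ∅` and
`succs s a ⊆ D ∪ F`. -/
inductive CRun {S A : Type*} [DecidableEq S] (app : S → A → Prop)
    (succs : S → A → Set S) (D F : Set S) : (S → Option A) → Prop
  | nil : CRun app succs D F (fun _ => none)
  | step {π : S → Option A} {s : S} {a : A} :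
      CRun app succs D F π → s ∈ D → π s = none → app s a →
      (succs s a ∩ (F ∪ pdom π)).Nonempty →
      succs s a ⊆ D ∪ F →
      CRun app succs D F (Function.update π s (some a))

section Policy

variable {S A : Type*} {succs : S → A → Set S} {π π' : S → Option A}

theorem pdom_update_some [DecidableEq S] (π : S → Option A) (s : S) (a : A) :
    pdom (Function.update π s (some a)) = insert s (pdom π) := by
  ext t
  by_cases hts : t = s <;> simp [pdom, Function.update_apply, hts]

theorem subpolicy_update_of_eq_none [DecidableEq S] {s : S} {a : A} (hs : π s = none) :
    subpolicy π (Function.update π s (some a)) := by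
  intro u b hb
  have hus : u ≠ s := by rintro rfl; simp [hs] at hb
  rwa [Function.update_of_ne hus]

theorem reachFrom_mono (h : subpolicy π π') (t : S) :
    reachFrom succs π t ⊆ reachFrom succs π' t :=
  fun _ hx => Relation.ReflTransGen.mono (fun _ _ ⟨b, hb, hv⟩ => ⟨b, h _ b hb, hv⟩) _ _ hx

theorem reachAll_subset_of {T : Set S} (hdom : pdom π ⊆ T)
    (hsuccs : ∀ c b, π c = some b → succs c b ⊆ T) : reachAll succs π ⊆ T := by
  intro x hx
  simp only [reachAll, Set.mem_iUnion] at hx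
  obtain ⟨t, ht, hxt⟩ := hx
  induction hxt with
  | refl => exact hdom ht
  | tail _ hstep _ =>
    obtain ⟨b, hb, hv⟩ := hstep
    exact hsuccs _ b hb hv

end Policy

namespace CRun

variable {S A : Type*} [DecidableEq S] {app : S → A → Prop} {succs : S → A → Set S}
  {D F : Set S} {π : S → Option A}

theorem pdom_subset (hrun : CRun app succs D F π) : pdom π ⊆ D := by
  induction hrun with
  | nil => simp [pdom]
  | @step π s a _ hsD _ _ _ _ ih =>
    rw [pdom_update_some]
    exact Set.insert_subset hsD ih

theorem succs_subset (hrun : CRun app succs D F π) {c : S} {b : A} (hcb : π c = some b) :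
    succs c b ⊆ D ∪ F := by
  induction hrun generalizing c with
  | nil => simp at hcb
  | @step π s a _ _ _ _ _ hsub ih =>
    by_cases hcs : c = s
    · subst hcs
      obtain rfl : a = b := by simpa using hcb
      exact hsub
    · rw [Function.update_of_ne hcs] at hcb
      exact ih hcb

theorem reachFrom_inter_nonempty (hrun : CRun app succs D F π) :
    ∀ t ∈ pdom π, (reachFrom succs π t ∩ F).Nonempty := by
  induction hrun with
  | nil => simp [pdom]
  | @step π s a _ _ hπs _ hne _ ih =>
    have hmono := reachFrom_mono (succs := succs) (subpolicy_update_of_eq_none (a := a) hπs)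
    intro t ht
    rw [pdom_update_some] at ht
    rcases ht with rfl | ht
    · obtain ⟨x, hxs, hxF | hxdom⟩ := hne
      · exact ⟨x, .single ⟨a, by simp, hxs⟩, hxF⟩
      · obtain ⟨f, hf, hfF⟩ := ih x hxdom
        exact ⟨f, Relation.ReflTransGen.head ⟨a, by simp, hxs⟩ (hmono x hf), hfF⟩
    · obtain ⟨f, hf, hfF⟩ := ih t ht
      exact ⟨f, hmono t hf, hfF⟩

end CRun

theorem concretizer_invariant_general {S A : Type*} [DecidableEq S] (app : S → A → Prop)
    (succs : S → A → Set S) (D F : Set S)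
    (π : S → Option A) (hrun : CRun app succs D F π) :
    pdom π ⊆ D ∧ reachAll succs π ⊆ D ∪ F ∧
      ∀ s ∈ pdom π, (reachFrom succs π s ∩ F).Nonempty :=
  ⟨hrun.pdom_subset,
    reachAll_subset_of (hrun.pdom_subset.trans Set.subset_union_left)
      fun _ _ => hrun.succs_subset,
    hrun.reachFrom_inter_nonempty⟩

/-- Concretizer invariant: throughout execution, the partially-built policy `π` satisfies
`domain(π) ⊆ D`, `reach(π) ⊆ D ∪ F`, and every domain state π-reaches a state of `F`. -/
theorem concretizer_invariant {S A : Type*} [DecidableEq S] (app : S → A → Prop)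
    (succs : S → A → Set S) (D F : Set S) (hDF : D ∩ F = ∅)
    (π : S → Option A) (hrun : CRun app succs D F π) :
    pdom π ⊆ D ∧ reachAll succs π ⊆ D ∪ F ∧
      ∀ s ∈ pdom π, (reachFrom succs π s ∩ F).Nonempty :=
  concretizer_invariant_general app succs D F π hrun
end

section
/- (Concretizer deduces solutions) Suppose π is a goal-closed policy with domain(π) = domain(π*) and front(π) ⊇ front(π*) for some solution π*. Then the concretizer applied to (domain(π), front(π)) returns a policy π'' which is a solution: π'' is proper, goal-closed, and covers the initial state. -/
section Aux

variable {S A : Type*} [DecidableEq S] {app : S → A → Prop} {succs : S → A → Set S}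
  {D F : Set S}

lemma pdom_update {π : S → Option A} {s : S} {a : A} :
    pdom (Function.update π s (some a)) = insert s (pdom π) := by
  ext t
  rcases eq_or_ne t s with h | h <;> simp [pdom, Function.update, h]

lemma crun_pdom_subset {π : S → Option A} (h : CRun app succs D F π) : pdom π ⊆ D := by
  induction h with
  | nil => intro t ht; simp [pdom] at ht
  | step _ hs _ _ _ _ ih => rw [pdom_update]; exact Set.insert_subset hs ih

lemma crun_succ_closed {π : S → Option A} (h : CRun app succs D F π) :
    ∀ u b, π u = some b → succs u b ⊆ D ∪ F := by
  induction h with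
  | nil => intro u b hb; simp at hb
  | @step π' s a _ _ _ _ _ hsub ih =>
      intro u b hb
      rcases eq_or_ne u s with rfl | hne'
      · rw [Function.update_self] at hb; cases hb; exact hsub
      · rw [Function.update_of_ne hne'] at hb; exact ih u b hb

lemma reach_mono {π : S → Option A} {s : S} (a : A) (hnone : π s = none) {t : S} :
    reachFrom succs π t ⊆ reachFrom succs (Function.update π s (some a)) t := by
  intro x hx
  refine Relation.ReflTransGen.mono ?_ _ _ hx
  rintro u v ⟨b, hb, hv⟩
  refine ⟨b, ?_, hv⟩
  rw [Function.update_of_ne, hb]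
  rintro rfl; rw [hnone] at hb; cases hb

lemma crun_escape {π : S → Option A} (h : CRun app succs D F π) :
    ∀ s ∈ pdom π, (reachFrom succs π s ∩ F).Nonempty := by
  induction h with
  | nil => intro s hs; simp [pdom] at hs
  | @step π' s a _ _ hnone _ hne _ ih =>
      intro t ht
      rw [pdom_update] at ht
      rcases ht with rfl | ht
      · obtain ⟨s', hs', hFd⟩ := hne
        have hstep : pstep succs (Function.update π' t (some a)) t s' :=
          ⟨a, Function.update_self _ _ _, hs'⟩
        rcases hFd with hF | hd
        · exact ⟨s', Relation.ReflTransGen.single hstep, hF⟩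
        · obtain ⟨f, hf, hfF⟩ := ih s' hd
          exact ⟨f, Relation.ReflTransGen.head hstep (reach_mono a hnone hf), hfF⟩
      · obtain ⟨f, hf, hfF⟩ := ih t ht
        exact ⟨f, reach_mono a hnone hf, hfF⟩

lemma crun_reach_sub {π : S → Option A} (h : CRun app succs D F π) :
    ∀ s ∈ D ∪ F, ∀ x ∈ reachFrom succs π s, x ∈ D ∪ F := by
  intro s hs x hx
  induction hx with
  | refl => exact hs
  | tail _ hstep ih =>
      obtain ⟨a, ha, hmem⟩ := hstep
      exact crun_succ_closed h _ a ha hmem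

omit [DecidableEq S] in
lemma star_succ_sub {πst : S → Option A} (hdomst : pdom πst = D)
    (hfrst : front succs πst ⊆ F) {u : S} {a : A} (hu : πst u = some a) :
    succs u a ⊆ D ∪ F := by
  intro s' hs'
  have hreach : s' ∈ reachAll succs πst := by
    refine Set.mem_biUnion (show u ∈ pdom πst by simp [pdom, hu]) ?_
    exact Relation.ReflTransGen.single ⟨a, hu, hs'⟩
  by_cases hd : s' ∈ pdom πst
  · exact Or.inl (hdomst ▸ hd)
  · exact Or.inr (hfrst ⟨hreach, hd⟩)

omit [DecidableEq S] in
lemma exists_next {πst π'' : S → Option A}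
    (hdomst : pdom πst = D) (hfrst : front succs πst ⊆ F)
    (hdisj : ∀ x ∈ F, x ∉ D) :
    ∀ s f, Relation.ReflTransGen (pstep succs πst) s f → f ∈ F → s ∈ D → s ∉ pdom π'' →
      ∃ u a, u ∈ D ∧ π'' u = none ∧ πst u = some a ∧
        (succs u a ∩ (F ∪ pdom π'')).Nonempty ∧ succs u a ⊆ D ∪ F := by
  intro s f hpath hfF
  induction hpath using Relation.ReflTransGen.head_induction_on with
  | refl => intro hsD _; exact absurd hsD (hdisj _ hfF)
  | head h' _ ih =>
      intro hsD hs
      obtain ⟨a, ha, hmem⟩ := h'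
      rename_i b c _
      by_cases hc : c ∈ F ∪ pdom π''
      · exact ⟨b, a, hsD, not_ne_iff.mp hs, ha, ⟨c, hmem, hc⟩,
          star_succ_sub hdomst hfrst ha⟩
      · rw [Set.mem_union] at hc
        push_neg at hc
        have hcD : c ∈ D := by
          rcases star_succ_sub hdomst hfrst ha hmem with h | h
          · exact h
          · exact absurd h hc.1
        exact ih hcD hc.2

end Aux

/-- Deducing solutions with the concretizer: if `π` is goal-closed with
`domain(π) = domain(π*)` and `front(π) ⊇ front(π*)` for some solution `π*`, then the
concretizer run on `(domain(π), front(π))` terminates, and any policy it returns is a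
solution (proper, goal-closed, and covering the initial state). -/
theorem concretizer_deduces_solution {S A : Type*} [DecidableEq S] (app : S → A → Prop)
    (succs : S → A → Set S) (Sg : Set S) (s0 : S)
    (πstar : S → Option A) (happstar : ∀ s a, πstar s = some a → app s a)
    (hsol : isSolution succs Sg s0 πstar)
    (π : S → Option A) (hfin : (pdom π).Finite)
    (hgc : goalClosed succs Sg π)
    (hdom : pdom π = pdom πstar)
    (hfr : front succs πstar ⊆ front succs π) :
    (∃ π'' : S → Option A,
        CRun app succs (pdom π) (front succs π) π'' ∧ pdom π'' = pdom π) ∧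
    (∀ π'' : S → Option A,
        CRun app succs (pdom π) (front succs π) π'' → pdom π'' = pdom π →
        isSolution succs Sg s0 π'') := by
  set D := pdom π with hD
  set F := front succs π with hF
  have hdisj : ∀ x ∈ F, x ∉ D := fun x hx => hx.2
  obtain ⟨hgcs, hprop, hs0⟩ := hsol
  have key : ∀ n (π'' : S → Option A), CRun app succs D F π'' →
      (D \ pdom π'').ncard ≤ n →
      ∃ πf, CRun app succs D F πf ∧ pdom πf = D := by
    intro n
    induction n with
    | zero =>
        intro π'' hrun hcard
        have hempt : D \ pdom π'' = ∅ :=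
          (Set.ncard_eq_zero (hfin.subset Set.diff_subset)).mp (Nat.le_zero.mp hcard)
        exact ⟨π'', hrun, Set.Subset.antisymm (crun_pdom_subset hrun)
          (Set.diff_eq_empty.mp hempt)⟩
    | succ n ih =>
        intro π'' hrun hcard
        by_cases hall : D ⊆ pdom π''
        · exact ⟨π'', hrun, Set.Subset.antisymm (crun_pdom_subset hrun) hall⟩
        · obtain ⟨s, hsD, hs⟩ := Set.not_subset.mp hall
          obtain ⟨f, hfreach, hffront⟩ := hprop s (hdom ▸ hsD)
          obtain ⟨u, a, huD, hunone, hua, hne, hsub⟩ :=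
            exists_next hdom.symm hfr hdisj s f hfreach (hfr hffront) hsD hs
          have hrun2 := CRun.step hrun huD hunone (happstar u a hua) hne hsub
          refine ih _ hrun2 ?_
          rw [pdom_update]
          have heq : D \ insert u (pdom π'') = (D \ pdom π'') \ {u} := by
            ext x; simp [and_comm]; tauto
          rw [heq]
          have hlt : ((D \ pdom π'') \ {u}).ncard < (D \ pdom π'').ncard :=
            Set.ncard_diff_singleton_lt_of_mem ⟨huD, fun h => h hunone⟩
              (hfin.subset Set.diff_subset)
          omega
  constructor
  · have hnil : CRun app succs D F (fun _ => none) := CRun.nil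
    exact key _ _ hnil le_rfl
  · intro π'' hrun hdom''
    refine ⟨?_, ?_, ?_⟩
    · intro x hx
      obtain ⟨hxa, hxd⟩ := hx
      obtain ⟨t, ht⟩ := Set.mem_iUnion.mp hxa
      obtain ⟨htdom, htx⟩ := Set.mem_iUnion.mp ht
      have hDF : x ∈ D ∪ F :=
        crun_reach_sub hrun t (Or.inl (crun_pdom_subset hrun htdom)) x htx
      rcases hDF with h | h
      · exact absurd (hdom'' ▸ h) hxd
      · exact hgc h
    · intro t ht
      obtain ⟨f, hfre, hfF⟩ := crun_escape hrun t ht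
      refine ⟨f, hfre, Set.mem_biUnion ht hfre, ?_⟩
      rw [hdom'']
      exact hfF.2
    · rcases hs0 with h | h
      · exact Or.inl h
      · right; rw [hdom'', hdom]; exact h
end
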